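/- Let v be a positive C² solution on (0,∞) of v'' + ((n-1-2α)/r + r/2) v' + r^{-2}(v^p - L^{p-1} v) = 0 with p > (n+2)/(n-2), bounded near 0 together with r v' and r² v'', and with r v'(r) → 0 as r → 0⁺. Then v(r) has a limit v₀ as r → 0⁺, and v₀ ∈ {0, L}. -/

import Mathlib

/-!
Multiplying the equation by `r² v'` shows that the energy `(r v')² / 2 + F(v)`, with
`F(x) = x^(p+1)/(p+1) - L^(p-1) x²/2`, is nonincreasing in `r` (this is where
`p > (n+2)/(n-2)` enters); being bounded near `0`, it has a limit, and since `r v' → 0`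
so does `F(v)`. As `F` is constant on no interval, the intermediate value theorem forbids
`liminf v < limsup v`, so `v → v₀`. Finally the equation gives `r (r v')' → -F'(v₀)`, which
must vanish because `r v'` converges, and the positive zero of `F'` is `L`.
-/

open Set Filter Topology

lemma supercritical_exponent_bounds {n p : ℝ} (hn : 2 < n) (hp : (n + 2) / (n - 2) < p) :
    1 < p ∧ 2 * (2 / (p - 1)) < n - 2 := by
  rw [div_lt_iff₀ (by linarith)] at hp
  have hp1 : 1 < p := by nlinarith
  refine ⟨hp1, ?_⟩
  rw [← mul_div_assoc, div_lt_iff₀ (by linarith)]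
  nlinarith

lemma eq_of_rpow_sub_mul_eq_zero {p L x : ℝ} (hp : p ≠ 1) (hL : 0 < L) (hx : 0 < x)
    (h : x ^ p - L ^ (p - 1) * x = 0) : x = L := by
  have hpow : x ^ (p - 1) = L ^ (p - 1) := by
    rw [Real.rpow_sub_one hx.ne', div_eq_iff hx.ne']
    linarith
  exact (Real.rpow_left_inj hx.le hL.le (sub_ne_zero.mpr hp)).mp hpow

lemma IsOpen.antitoneOn_of_hasDerivAt_nonpos {D : Set ℝ} (hDo : IsOpen D) (hD : Convex ℝ D)
    {f f' : ℝ → ℝ} (hf : ∀ x ∈ D, HasDerivAt f (f' x) x) (hf' : ∀ x ∈ D, f' x ≤ 0) :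
    AntitoneOn f D := by
  refine antitoneOn_of_hasDerivWithinAt_nonpos (f' := f') hD
    (fun x hx => (hf x hx).continuousAt.continuousWithinAt) ?_ ?_ <;> rw [hDo.interior_eq]
  exacts [fun x hx => (hf x hx).hasDerivWithinAt, hf']

lemma nonneg_of_tendsto_mul_deriv {g g' : ℝ → ℝ} {ℓ c : ℝ}
    (hg : ∀ r > 0, HasDerivAt g (g' r) r) (hgℓ : Tendsto g (𝓝[>] 0) (𝓝 ℓ))
    (hc : Tendsto (fun r => r * g' r) (𝓝[>] 0) (𝓝 c)) : 0 ≤ c := by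
  by_contra! hneg
  -- then `g - (c / 2) * log` is antitone near `0`, which forces `g → +∞`
  obtain ⟨r₀, hr₀, hsub⟩ := mem_nhdsGT_iff_exists_Ioo_subset.mp
    (hc.eventually (eventually_le_nhds (by linarith : c < c / 2)))
  have hanti : AntitoneOn (fun r => g r - c / 2 * Real.log r) (Ioo 0 r₀) := by
    refine isOpen_Ioo.antitoneOn_of_hasDerivAt_nonpos (convex_Ioo 0 r₀)
      (fun r hr => (hg r hr.1).sub ((Real.hasDerivAt_log hr.1.ne').const_mul (c / 2))) ?_
    intro r hr
    have hle : r * g' r ≤ c / 2 := hsub hr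
    have hr0 := hr.1
    rw [sub_nonpos, ← div_eq_mul_inv, le_div_iff₀ hr0]
    linarith
  have hlow : ∀ᶠ r in 𝓝[>] 0,
      g (r₀ / 2) - c / 2 * Real.log (r₀ / 2) + c / 2 * Real.log r ≤ g r := by
    filter_upwards [Ioo_mem_nhdsGT (half_pos hr₀)] with r hr
    have := hanti ⟨hr.1, hr.2.trans (half_lt_self hr₀)⟩ ⟨half_pos hr₀, half_lt_self hr₀⟩
      hr.2.le
    linarith
  have hlog : Tendsto (fun r => c / 2 * Real.log r) (𝓝[>] 0) atTop :=
    (tendsto_const_mul_atTop_of_neg (by linarith)).mpr Real.tendsto_log_nhdsGT_zero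
  exact not_tendsto_atTop_of_tendsto_nhds hgℓ
    (tendsto_atTop_mono' _ hlow (tendsto_atTop_add_const_left _ _ hlog))

lemma eq_zero_of_tendsto_mul_deriv {g g' : ℝ → ℝ} {ℓ c : ℝ}
    (hg : ∀ r > 0, HasDerivAt g (g' r) r) (hgℓ : Tendsto g (𝓝[>] 0) (𝓝 ℓ))
    (hc : Tendsto (fun r => r * g' r) (𝓝[>] 0) (𝓝 c)) : c = 0 := by
  have hneg : 0 ≤ -c := nonneg_of_tendsto_mul_deriv (fun r hr => (hg r hr).neg) hgℓ.neg
    (by simpa only [mul_neg] using hc.neg)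
  linarith [nonneg_of_tendsto_mul_deriv hg hgℓ hc]

lemma frequently_eq_of_frequently_lt_of_frequently_gt {v : ℝ → ℝ}
    (hv : ContinuousOn v (Ioi 0)) {c : ℝ} (hlt : ∃ᶠ r in 𝓝[>] 0, v r < c)
    (hgt : ∃ᶠ r in 𝓝[>] 0, c < v r) :
    ∃ᶠ r in 𝓝[>] 0, v r = c := by
  rw [frequently_iff]
  intro U hU
  obtain ⟨u, hu, hsub⟩ := mem_nhdsGT_iff_exists_Ioo_subset.mp hU
  have hmem : Ioo (0 : ℝ) u ∈ 𝓝[>] 0 := Ioo_mem_nhdsGT hu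
  obtain ⟨s, hs, hsu⟩ := (hlt.and_eventually hmem).exists
  obtain ⟨t, ht, htu⟩ := (hgt.and_eventually hmem).exists
  have hst : uIcc s t ⊆ Ioo 0 u := ordConnected_Ioo.uIcc_subset hsu htu
  obtain ⟨x, hx, hvx⟩ := intermediate_value_uIcc (hv.mono fun y hy => (hst hy).1)
    (mem_uIcc_of_le hs.le ht.le)
  exact ⟨x, hsub (hst hx), hvx⟩

lemma exists_tendsto_of_tendsto_comp {v F : ℝ → ℝ} {E : ℝ} (hv : ContinuousOn v (Ioi 0))
    (hv0 : ∀ r > 0, 0 ≤ v r) (hbdd : (𝓝[>] (0 : ℝ)).IsBoundedUnder (· ≤ ·) v)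
    (hF : Tendsto (fun r => F (v r)) (𝓝[>] 0) (𝓝 E))
    (hFE : ∀ a b, 0 ≤ a → a < b → ∃ c ∈ Ioo a b, F c ≠ E) :
    ∃ v₀, 0 ≤ v₀ ∧ Tendsto v (𝓝[>] 0) (𝓝 v₀) := by
  have hv0' : ∀ᶠ r in 𝓝[>] (0 : ℝ), 0 ≤ v r := eventually_nhdsWithin_of_forall hv0
  have hbdd' : (𝓝[>] (0 : ℝ)).IsBoundedUnder (· ≥ ·) v :=
    isBoundedUnder_of_eventually_ge hv0'
  have ha : 0 ≤ liminf v (𝓝[>] 0) := le_liminf_of_le hbdd.isCoboundedUnder_ge hv0'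
  refine ⟨_, ha, tendsto_of_liminf_eq_limsup rfl ?_ hbdd hbdd'⟩
  by_contra hne
  obtain ⟨c, ⟨hac, hcb⟩, hc⟩ :=
    hFE _ _ ha ((liminf_le_limsup hbdd hbdd').lt_of_ne (Ne.symm hne))
  have hfreq : ∃ᶠ r in 𝓝[>] 0, v r = c := frequently_eq_of_frequently_lt_of_frequently_gt hv
    (frequently_lt_of_liminf_lt hbdd.isCoboundedUnder_ge hac)
    (frequently_lt_of_lt_limsup hbdd'.isCoboundedUnder_le hcb)
  exact hc (tendsto_nhds_unique_of_frequently_eq tendsto_const_nhds hF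
    (hfreq.mono fun r hr => by rw [hr]))

lemma hasDerivAt_of_contDiffOn_two {v : ℝ → ℝ} (hv : ContDiffOn ℝ 2 v (Ioi 0)) {r : ℝ}
    (hr : 0 < r) :
    HasDerivAt v (deriv v r) r ∧ HasDerivAt (deriv v) (deriv (deriv v) r) r :=
  ⟨((hv.differentiableOn (by norm_num)).differentiableAt (Ioi_mem_nhds hr)).hasDerivAt,
    (((hv.deriv_of_isOpen isOpen_Ioi (m := 1) (by norm_num)).differentiableOn one_ne_zero)
      |>.differentiableAt (Ioi_mem_nhds hr)).hasDerivAt⟩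

lemma ode_clear_denominators {a b c γ r : ℝ} (hr : 0 < r)
    (h : a + (γ / r + r / 2) * b + r ^ (-2 : ℝ) * c = 0) :
    r ^ 2 * a + (γ * r + r ^ 3 / 2) * b + c = 0 := by
  rw [Real.rpow_neg_ofNat, zpow_neg, zpow_ofNat] at h
  field_simp at h
  linear_combination h / 2

noncomputable def potential (p K x : ℝ) : ℝ := x ^ (p + 1) / (p + 1) - K * x ^ 2 / 2

lemma hasDerivAt_potential {p : ℝ} (K : ℝ) (hp : p + 1 ≠ 0) {x : ℝ} (hx : 0 < x) :
    HasDerivAt (potential p K) (x ^ p - K * x) x := by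
  have h₁ := (Real.hasDerivAt_rpow_const (p := p + 1) (Or.inl hx.ne')).div_const (p + 1)
  have h₂ := ((hasDerivAt_pow 2 x).const_mul K).div_const 2
  refine (h₁.sub h₂).congr_deriv ?_
  rw [add_sub_cancel_right]
  field_simp
  ring

lemma exists_potential_ne {p L : ℝ} (hp : 1 < p) (hL : 0 < L) (E : ℝ) {a b : ℝ} (ha : 0 ≤ a)
    (hab : a < b) : ∃ c ∈ Ioo a b, potential p (L ^ (p - 1)) c ≠ E := by
  by_contra! hconst
  obtain ⟨ξ, hξ, hξL⟩ : ∃ ξ ∈ Ioo a b, ξ ≠ L := by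
    by_cases h : (2 * a + b) / 3 = L
    · exact ⟨(a + 2 * b) / 3, ⟨by linarith, by linarith⟩, by linarith⟩
    · exact ⟨(2 * a + b) / 3, ⟨by linarith, by linarith⟩, h⟩
  have hξ0 : 0 < ξ := ha.trans_lt hξ.1
  have hloc : potential p (L ^ (p - 1)) =ᶠ[𝓝 ξ] fun _ => E :=
    eventually_of_mem (Ioo_mem_nhds hξ.1 hξ.2) hconst
  have hzero := (hasDerivAt_potential (L ^ (p - 1)) (by linarith) hξ0).unique
    ((hasDerivAt_const ξ E).congr_of_eventuallyEq hloc)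
  exact hξL (eq_of_rpow_sub_mul_eq_zero hp.ne' hL hξ0 hzero)

noncomputable def energy (p K : ℝ) (v : ℝ → ℝ) (r : ℝ) : ℝ :=
  (r * deriv v r) ^ 2 / 2 + potential p K (v r)

lemma energy_le {p K C : ℝ} {v : ℝ → ℝ} {r : ℝ} (hp : 0 < p + 1) (hK : 0 ≤ K)
    (hv0 : 0 ≤ v r) (hvC : v r ≤ C) (hg : |r * deriv v r| ≤ C) :
    energy p K v r ≤ C ^ (p + 1) / (p + 1) + C ^ 2 / 2 := by
  have hg2 : (r * deriv v r) ^ 2 ≤ C ^ 2 := sq_le_sq' (abs_le.mp hg).1 (abs_le.mp hg).2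
  have hvp : v r ^ (p + 1) / (p + 1) ≤ C ^ (p + 1) / (p + 1) := by gcongr
  have hKv : 0 ≤ K * v r ^ 2 / 2 := by positivity
  unfold energy potential
  linarith

section Energy

variable {p K γ : ℝ} {v : ℝ → ℝ}
  (hv : ∀ r > 0, HasDerivAt v (deriv v r) r)
  (hv' : ∀ r > 0, HasDerivAt (deriv v) (deriv (deriv v) r) r)
  (hode : ∀ r > 0, r ^ 2 * deriv (deriv v) r + (γ * r + r ^ 3 / 2) * deriv v r
    + (v r ^ p - K * v r) = 0)

include hv' in
lemma hasDerivAt_mul_deriv {r : ℝ} (hr : 0 < r) :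
    HasDerivAt (fun r => r * deriv v r) (deriv v r + r * deriv (deriv v) r) r :=
  ((hasDerivAt_id r).mul (hv' r hr)).congr_deriv (by simp)

include hv' hode

include hv in
lemma hasDerivAt_energy (hp : p + 1 ≠ 0) (hpos : ∀ r > 0, 0 < v r) {r : ℝ} (hr : 0 < r) :
    HasDerivAt (energy p K v) (-(deriv v r ^ 2 * ((γ - 1) * r + r ^ 3 / 2))) r := by
  have h := (((hasDerivAt_mul_deriv hv' hr).pow 2).div_const 2).add
    ((hasDerivAt_potential K hp (hpos r hr)).comp r (hv r hr))
  refine h.congr_deriv ?_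
  linear_combination deriv v r * hode r hr

include hv in
lemma antitoneOn_energy (hp : p + 1 ≠ 0) (hpos : ∀ r > 0, 0 < v r) (hγ : 1 ≤ γ) :
    AntitoneOn (energy p K v) (Ioi 0) :=
  isOpen_Ioi.antitoneOn_of_hasDerivAt_nonpos (convex_Ioi 0)
    (fun r hr => hasDerivAt_energy hv hv' hode hp hpos hr) fun r (hr : 0 < r) => by
      have : 0 ≤ (γ - 1) * r + r ^ 3 / 2 := by positivity
      simpa using mul_nonneg (sq_nonneg (deriv v r)) this

lemma rpow_sub_mul_eq_zero_of_tendsto (hp : 0 ≤ p) {v₀ : ℝ}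
    (hrv : Tendsto (fun r => r * deriv v r) (𝓝[>] 0) (𝓝 0))
    (hlim : Tendsto v (𝓝[>] 0) (𝓝 v₀)) : v₀ ^ p - K * v₀ = 0 := by
  have hf : Tendsto (fun r => v r ^ p - K * v r) (𝓝[>] 0) (𝓝 (v₀ ^ p - K * v₀)) :=
    ((Real.continuousAt_rpow_const v₀ p (Or.inr hp)).tendsto.comp hlim).sub
      (hlim.const_mul K)
  have hsq : Tendsto (fun r : ℝ => r ^ 2 / 2) (𝓝[>] 0) (𝓝 0) :=
    tendsto_nhdsWithin_of_tendsto_nhds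
      (by simpa using ((continuous_pow 2).div_const (2 : ℝ)).tendsto 0)
  have hlim' : Tendsto (fun r => r * (deriv v r + r * deriv (deriv v) r)) (𝓝[>] 0)
      (𝓝 (-(v₀ ^ p - K * v₀))) := by
    have h := (((hrv.const_mul (γ - 1)).add (hsq.mul hrv)).add hf).neg
    simp only [mul_zero, zero_add] at h
    refine h.congr' (eventually_nhdsWithin_of_forall fun r (hr : 0 < r) => ?_)
    linear_combination -hode r hr
  exact neg_eq_zero.mp
    (eq_zero_of_tendsto_mul_deriv (fun r hr => hasDerivAt_mul_deriv hv' hr) hrv hlim')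

end Energy

theorem stmt9_general (n : ℕ) (hn : 2 < n) (p : ℝ) (hp : ((n : ℝ) + 2) / ((n : ℝ) - 2) < p)
    (α L : ℝ) (hα : α = 2 / (p - 1)) (hL : 0 < L)
    (v : ℝ → ℝ) (hpos : ∀ r > 0, 0 < v r)
    (hC2 : ContDiffOn ℝ 2 v (Ioi 0))
    (heq : ∀ r > 0, deriv (deriv v) r + (((n : ℝ) - 1 - 2 * α) / r + r / 2) * deriv v r
      + r ^ (-2 : ℝ) * (v r ^ p - L ^ (p - 1) * v r) = 0)
    (C₀ : ℝ) (hbd : ∀ r ∈ Ioo (0:ℝ) 1,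
      v r + r * |deriv v r| + r ^ 2 * |deriv (deriv v) r| ≤ C₀)
    (hrv : Tendsto (fun r : ℝ => r * deriv v r) (nhdsWithin 0 (Ioi 0)) (nhds 0)) :
    ∃ v₀ : ℝ, Tendsto v (nhdsWithin 0 (Ioi 0)) (nhds v₀) ∧ (v₀ = 0 ∨ v₀ = L) := by
  obtain ⟨hp1, hγ⟩ := supercritical_exponent_bounds (by exact_mod_cast hn) hp
  have hv r (hr : 0 < r) := (hasDerivAt_of_contDiffOn_two hC2 hr).1
  have hv' r (hr : 0 < r) := (hasDerivAt_of_contDiffOn_two hC2 hr).2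
  have hode r (hr : 0 < r) := ode_clear_denominators hr (heq r hr)
  have hsmall : ∀ r ∈ Ioo (0 : ℝ) 1, v r ≤ C₀ ∧ |r * deriv v r| ≤ C₀ := fun r hr => by
    have := hbd r hr
    rw [abs_mul, abs_of_pos hr.1]
    have h₁ : 0 ≤ r * |deriv v r| := mul_nonneg hr.1.le (abs_nonneg _)
    have h₂ : 0 ≤ r ^ 2 * |deriv (deriv v) r| := by positivity
    constructor <;> linarith [hpos r hr.1]
  obtain ⟨E, hE⟩ : ∃ E, Tendsto (energy p (L ^ (p - 1)) v) (𝓝[>] 0) (𝓝 E) :=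
    ⟨_, ((antitoneOn_energy hv hv' hode (by linarith) hpos (by subst hα; linarith)).mono
      Ioo_subset_Ioi_self).tendsto_nhdsWithin_Ioo_right (nonempty_Ioo.mpr one_pos)
      ⟨_, forall_mem_image.mpr fun r hr => energy_le (by linarith) (by positivity)
        (hpos r hr.1).le (hsmall r hr).1 (hsmall r hr).2⟩⟩
  have hF : Tendsto (fun r => potential p (L ^ (p - 1)) (v r)) (𝓝[>] 0) (𝓝 E) := by
    simpa [energy] using hE.sub ((hrv.pow 2).div_const 2)
  obtain ⟨v₀, hv₀, hlim⟩ := exists_tendsto_of_tendsto_comp hC2.continuousOn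
    (fun r hr => (hpos r hr).le)
    (isBoundedUnder_of_eventually_le (eventually_of_mem (Ioo_mem_nhdsGT one_pos) fun r hr =>
      (hsmall r hr).1)) hF fun _ _ => exists_potential_ne hp1 hL E
  refine ⟨v₀, hlim, hv₀.eq_or_lt.imp Eq.symm fun h => ?_⟩
  exact eq_of_rpow_sub_mul_eq_zero hp1.ne' hL h
    (rpow_sub_mul_eq_zero_of_tendsto hv' hode (by linarith) hrv hlim)

theorem stmt9 (n : ℕ) (hn : 2 < n) (p : ℝ) (hp : ((n : ℝ) + 2) / ((n : ℝ) - 2) < p)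
    (α L : ℝ) (hα : α = 2 / (p - 1)) (hL : 0 < L)
    (hLp : L ^ (p - 1) = 2 / (p - 1) ^ 2 * (((n : ℝ) - 2) * p - n))
    (v : ℝ → ℝ) (hpos : ∀ r > 0, 0 < v r)
    (hC2 : ContDiffOn ℝ 2 v (Ioi 0))
    (heq : ∀ r > 0, deriv (deriv v) r + (((n : ℝ) - 1 - 2 * α) / r + r / 2) * deriv v r
      + r ^ (-2 : ℝ) * (v r ^ p - L ^ (p - 1) * v r) = 0)
    (C₀ : ℝ) (hbd : ∀ r ∈ Ioo (0:ℝ) 1,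
      v r + r * |deriv v r| + r ^ 2 * |deriv (deriv v) r| ≤ C₀)
    (hrv : Tendsto (fun r : ℝ => r * deriv v r) (nhdsWithin 0 (Ioi 0)) (nhds 0)) :
    ∃ v₀ : ℝ, Tendsto v (nhdsWithin 0 (Ioi 0)) (nhds v₀) ∧ (v₀ = 0 ∨ v₀ = L) :=
  stmt9_general n hn p hp α L hα hL v hpos hC2 heq C₀ hbd hrv
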